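/- Suppose that (x_1,…,x_n)^a ⊄ I (as ideals of S). Then Hom_T(J, T/J)_{(−1,−1)} = 0. -/

import Mathlib

open MvPolynomial

noncomputable section

/-- The bigrading on `T = k[x_1,…,x_n,y_1,…,y_n]` (with the `x`-variables indexed by
`Sum.inl` and the `y`-variables by `Sum.inr`): each `x_i` has bidegree `(1,0)` and
each `y_i` has bidegree `(0,1)`.  We use `ℤ × ℤ` so that components of negative
bidegree make sense (they are zero). -/
def bidegWeight (n : ℕ) : (Fin n ⊕ Fin n) → ℤ × ℤ :=
  Sum.elim (fun _ => ((1 : ℤ), (0 : ℤ))) (fun _ => ((0 : ℤ), (1 : ℤ)))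

/-- A homogeneous ideal of `S = k[x_1,…,x_n]`: an ideal containing all homogeneous
components of its elements. -/
def IsHomogeneousIdeal {k : Type} [Field k] {n : ℕ}
    (I : Ideal (MvPolynomial (Fin n) k)) : Prop :=
  ∀ f ∈ I, ∀ d : ℕ, homogeneousComponent d f ∈ I

/-- A bihomogeneous ideal of `T`: an ideal containing all bihomogeneous components
of its elements. -/
def IsBihomogeneousIdeal {k : Type} [Field k] {n : ℕ}
    (P : Ideal (MvPolynomial (Fin n ⊕ Fin n) k)) : Prop :=
  ∀ f ∈ P, ∀ γ δ : ℤ, weightedHomogeneousComponent (bidegWeight n) (γ, δ) f ∈ P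

/-- `depth(S₊, S/I) ≥ d`: there exist `d` homogeneous elements of positive degree
of `S` forming a regular sequence on the `S`-module `S/I`. -/
def DepthGE {k : Type} [Field k] {n : ℕ} (I : Ideal (MvPolynomial (Fin n) k))
    (d : ℕ) : Prop :=
  ∃ fs : List (MvPolynomial (Fin n) k), fs.length = d ∧
    (∀ f ∈ fs, ∃ m : ℕ, 0 < m ∧ f ∈ homogeneousSubmodule (Fin n) k m) ∧
    RingTheory.Sequence.IsRegular (MvPolynomial (Fin n) k ⧸ I) fs

/-- The ideal `m_x = (x_1,…,x_n)` of `T`. -/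
def mxIdeal (k : Type) [Field k] (n : ℕ) : Ideal (MvPolynomial (Fin n ⊕ Fin n) k) :=
  Ideal.span (Set.range fun i : Fin n => X (Sum.inl i))

/-- The ideal `m_y = (y_1,…,y_n)` of `T`. -/
def myIdeal (k : Type) [Field k] (n : ℕ) : Ideal (MvPolynomial (Fin n ⊕ Fin n) k) :=
  Ideal.span (Set.range fun i : Fin n => X (Sum.inr i))

/-- The quadric `Q = x_1y_1 + ⋯ + x_ny_n ∈ T`. -/
def Qpoly (k : Type) [Field k] (n : ℕ) : MvPolynomial (Fin n ⊕ Fin n) k :=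
  ∑ i : Fin n, X (Sum.inl i) * X (Sum.inr i)

/-- The TNT frame `J = I·T + m_x^{a+1} + m_y^{b+1} + (Q)` of an ideal `I ⊆ S`. -/
def frameIdeal {k : Type} [Field k] {n : ℕ} (I : Ideal (MvPolynomial (Fin n) k))
    (a b : ℕ) : Ideal (MvPolynomial (Fin n ⊕ Fin n) k) :=
  I.map (rename Sum.inl) ⊔ (mxIdeal k n) ^ (a + 1) ⊔ (myIdeal k n) ^ (b + 1)
    ⊔ Ideal.span {Qpoly k n}

/-- A `T`-linear map `φ : N → T/K` (where `N`, `K` are ideals of `T`) has bidegree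
`(α,β)` if it maps every bihomogeneous element of `N` of bidegree `(γ,δ)` into the
image in `T/K` of the bidegree-`(γ+α, δ+β)` component of `T`. -/
def HomOfBidegree {k : Type} [Field k] {n : ℕ}
    (N K : Ideal (MvPolynomial (Fin n ⊕ Fin n) k)) (α β : ℤ)
    (φ : N →ₗ[MvPolynomial (Fin n ⊕ Fin n) k]
      (MvPolynomial (Fin n ⊕ Fin n) k ⧸ K)) : Prop :=
  ∀ (γ δ : ℤ) (f : MvPolynomial (Fin n ⊕ Fin n) k) (hf : f ∈ N),
    IsWeightedHomogeneous (bidegWeight n) f (γ, δ) →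
      ∃ g : MvPolynomial (Fin n ⊕ Fin n) k,
        IsWeightedHomogeneous (bidegWeight n) g (γ + α, δ + β) ∧
        φ ⟨f, hf⟩ = Ideal.Quotient.mk K g

/-- The `k`-derivation `D_A` of `T` with `D_A(x_i) = 0` and
`D_A(y_i) = Σ_j A_{ij}·x_j`, applied to `f`. -/
def derA {k : Type} [Field k] {n : ℕ} (A : Matrix (Fin n) (Fin n) k)
    (f : MvPolynomial (Fin n ⊕ Fin n) k) : MvPolynomial (Fin n ⊕ Fin n) k :=
  ∑ i : Fin n, (∑ j : Fin n, A i j • X (Sum.inl j)) * pderiv (Sum.inr i) f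

/-- The ideal `p = (y_1²,…,y_n²) + y_1·m_y ⊆ T` used in the characteristic-two
tweaked frame (`h` witnesses `0 < n` so that `y_1` makes sense). -/
def pIdeal (k : Type) [Field k] (n : ℕ) (h : 0 < n) :
    Ideal (MvPolynomial (Fin n ⊕ Fin n) k) :=
  Ideal.span ((Set.range fun i : Fin n => (X (Sum.inr i) : MvPolynomial (Fin n ⊕ Fin n) k) ^ 2)
    ∪ (Set.range fun i : Fin n => X (Sum.inr (⟨0, h⟩ : Fin n)) * X (Sum.inr i)))

/-- The tweaked frame `J' = I·T + m_x^{a+1} + p + (Q)` of size `a` for `I`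
(characteristic two). -/
def tweakedFrameIdeal {k : Type} [Field k] {n : ℕ} (I : Ideal (MvPolynomial (Fin n) k))
    (a : ℕ) (h : 0 < n) : Ideal (MvPolynomial (Fin n ⊕ Fin n) k) :=
  I.map (rename Sum.inl) ⊔ (mxIdeal k n) ^ (a + 1) ⊔ pIdeal k n h
    ⊔ Ideal.span {Qpoly k n}

/-- Abbreviation for `S = k[x_1,…,x_n]`. -/
abbrev Spoly (k : Type) [Field k] (n : ℕ) := MvPolynomial (Fin n) k

/-- Abbreviation for `T = k[x_1,…,x_n,y_1,…,y_n]`. -/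
abbrev Tpoly (k : Type) [Field k] (n : ℕ) := MvPolynomial (Fin n ⊕ Fin n) k

/-! A map `φ` of bidegree `(-1,-1)` kills every bihomogeneous element of `J` of bidegree
`(γ,0)` or `(0,δ)`, because `T` vanishes in negative bidegrees; as `I` is homogeneous, this
disposes of `I·T`, `m_x^{a+1}` and `m_y^{b+1}`. So `φ` is determined by `φ(Q)`, which has
bidegree `(0,0)` and is therefore a constant `c`. For a monomial `f` of degree `a` outside `I`,
`f·Q = Σ y_i·(f·x_i)` with `f·x_i ∈ m_x^{a+1}`, hence `c·f = φ(f·Q) = 0` in `T/J`. But `f ∉ J`: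
setting `y = 0` maps `J` into `I + m^{a+1}`, which contains no form of degree `a` outside `I`.
So `c = 0`. -/

lemma Finsupp.weight_mapDomain {σ τ M : Type*} [AddCommMonoid M] (f : σ → τ) (w : τ → M)
    (d : σ →₀ ℕ) : Finsupp.weight w (d.mapDomain f) = Finsupp.weight (w ∘ f) d :=
  Finsupp.linearCombination_mapDomain _ _ _

lemma Finsupp.weight_const {σ M : Type*} [AddCommMonoid M] (e : M) (d : σ →₀ ℕ) :
    Finsupp.weight (fun _ => e) d = d.degree • e := by
  simp [Finsupp.weight_apply, Finsupp.degree_apply, Finsupp.sum, Finset.sum_smul]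

theorem MvPolynomial.IsHomogeneous.isWeightedHomogeneous_rename {R σ τ M : Type*}
    [CommSemiring R] [AddCommMonoid M] {p : MvPolynomial σ R} {j : ℕ} (hp : p.IsHomogeneous j)
    {f : σ → τ} {w : τ → M} {e : M} (hw : ∀ i, w (f i) = e) :
    IsWeightedHomogeneous w (rename f p) (j • e) := by
  induction hp using IsWeightedHomogeneous.induction_on with
  | zero => simpa using isWeightedHomogeneous_zero R w _
  | add p q _ _ hp hq => simpa using hp.add hq
  | monomial d r hd =>
    rw [rename_monomial]
    apply isWeightedHomogeneous_monomial
    rw [Finsupp.weight_mapDomain, show w ∘ f = fun _ => e from _root_.funext hw,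
      Finsupp.weight_const, ← hd, Finsupp.degree_eq_weight_one]
    rfl

section Bigrading

variable {R : Type*} [CommSemiring R] {n : ℕ}

lemma weight_bidegWeight (d : Fin n ⊕ Fin n →₀ ℕ) :
    Finsupp.weight (bidegWeight n) d =
      (((∑ i, d (Sum.inl i) : ℕ) : ℤ), ((∑ i, d (Sum.inr i) : ℕ) : ℤ)) := by
  rw [Finsupp.weight_eq_sum, Fintype.sum_sum_type]
  ext <;> simp [bidegWeight, Prod.fst_sum, Prod.snd_sum]

lemma eq_zero_of_isWeightedHomogeneous_bidegWeight {g : MvPolynomial (Fin n ⊕ Fin n) R}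
    {γ δ : ℤ} (hg : IsWeightedHomogeneous (bidegWeight n) g (γ, δ)) (hneg : γ < 0 ∨ δ < 0) :
    g = 0 := by
  ext d
  by_contra hd
  have hw := hg hd
  rw [weight_bidegWeight, Prod.mk.injEq] at hw
  omega

lemma eq_C_of_isWeightedHomogeneous_bidegWeight_zero {g : MvPolynomial (Fin n ⊕ Fin n) R}
    (hg : IsWeightedHomogeneous (bidegWeight n) g 0) : g = C (coeff 0 g) := by
  ext d
  rw [coeff_C]
  split_ifs with hd
  · rw [hd]
  · by_contra hgd
    have hw := hg hgd
    rw [weight_bidegWeight, Prod.mk_eq_zero] at hw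
    simp only [Nat.cast_eq_zero, Finset.sum_eq_zero_iff, Finset.mem_univ, true_imp_iff] at hw
    exact hd (Finsupp.ext fun i => by cases i <;> simp [hw.1, hw.2])

lemma isWeightedHomogeneous_Qpoly {k : Type} [Field k] :
    IsWeightedHomogeneous (bidegWeight n) (Qpoly k n) (1, 1) :=
  IsWeightedHomogeneous.sum _ _ _ fun i _ =>
    (isWeightedHomogeneous_X k _ (Sum.inl i)).mul (isWeightedHomogeneous_X k _ (Sum.inr i))

end Bigrading

section Ideals

variable {k : Type} [Field k] {n : ℕ}

lemma isHomogeneousIdeal_pow_idealOfVars (m : ℕ) :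
    IsHomogeneousIdeal (idealOfVars (Fin n) k ^ m) := by
  intro p hp j
  rw [mem_pow_idealOfVars_iff] at hp ⊢
  intro d hd
  rw [support_homogeneousComponent, Finset.mem_filter] at hd
  exact hp d hd.1

lemma IsHomogeneousIdeal.mem_of_mem_sup_pow_idealOfVars {I : Ideal (Spoly k n)}
    (hI : IsHomogeneousIdeal I) {p : Spoly k n} {j : ℕ} (hp : p.IsHomogeneous j)
    (h : p ∈ I ⊔ idealOfVars (Fin n) k ^ (j + 1)) : p ∈ I := by
  obtain ⟨q, hq, r, hr, rfl⟩ := Submodule.mem_sup.mp h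
  have hr0 : homogeneousComponent j r = 0 :=
    homogeneousComponent_eq_zero' _ _ fun d hd => by
      have := (mem_pow_idealOfVars_iff _ r).mp hr d hd
      omega
  rw [← homogeneousComponent_eq_self hp, map_add, hr0, add_zero]
  exact hI q hq j

lemma exists_monomial_notMem_of_not_pow_idealOfVars_le {I : Ideal (Spoly k n)} {a : ℕ}
    (h : ¬ idealOfVars (Fin n) k ^ a ≤ I) :
    ∃ d : Fin n →₀ ℕ, d.degree = a ∧ monomial d (1 : k) ∉ I := by
  simpa [pow_idealOfVars_eq_span, Ideal.span_le, Set.image_subset_iff, Set.subset_def] using h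

lemma mxIdeal_eq_map : mxIdeal k n = (idealOfVars (Fin n) k).map (rename Sum.inl) := by
  rw [mxIdeal, idealOfVars, Ideal.map_span, ← Set.range_comp]
  simp [Function.comp_def]

lemma myIdeal_eq_map : myIdeal k n = (idealOfVars (Fin n) k).map (rename Sum.inr) := by
  rw [myIdeal, idealOfVars, Ideal.map_span, ← Set.range_comp]
  simp [Function.comp_def]

lemma map_frameIdeal_le (I : Ideal (Spoly k n)) (a b : ℕ) :
    (frameIdeal I a b).map (bind₁ (Sum.elim X 0)) ≤ I ⊔ idealOfVars (Fin n) k ^ (a + 1) := by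
  have hx : (mxIdeal k n).map (bind₁ (Sum.elim X (0 : Fin n → Spoly k n))) =
      idealOfVars (Fin n) k := by
    rw [mxIdeal_eq_map, Ideal.map_mapₐ, bind₁_comp_rename, Sum.elim_comp_inl, bind₁_X_left,
      Ideal.map_idₐ]
  have hy : (myIdeal k n).map (bind₁ (Sum.elim X (0 : Fin n → Spoly k n))) = ⊥ := by
    rw [myIdeal, Ideal.map_span, Ideal.span_eq_bot]
    rintro _ ⟨_, ⟨i, rfl⟩, rfl⟩
    simp
  simp [frameIdeal, Ideal.map_sup, Ideal.map_pow, hx, hy, Ideal.map_mapₐ, bind₁_comp_rename,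
    Ideal.map_span, Qpoly]

lemma rename_inl_notMem_frameIdeal {I : Ideal (Spoly k n)} (hI : IsHomogeneousIdeal I)
    {a : ℕ} (b : ℕ) {p : Spoly k n} (hp : p.IsHomogeneous a) (hpI : p ∉ I) :
    rename Sum.inl p ∉ frameIdeal I a b := by
  intro h
  refine hpI (hI.mem_of_mem_sup_pow_idealOfVars hp (map_frameIdeal_le I a b ?_))
  have := Ideal.mem_map_of_mem (bind₁ (Sum.elim X (0 : Fin n → Spoly k n))) h
  rwa [bind₁_rename, Sum.elim_comp_inl, bind₁_X_left, AlgHom.id_apply] at this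

end Ideals

lemma LinearMap.mem_map_subtype_ker_iff {R M P : Type*} [Semiring R] [AddCommMonoid M]
    [Module R M] [AddCommMonoid P] [Module R P] {N : Submodule R M} {φ : N →ₗ[R] P} {x : M} :
    x ∈ (LinearMap.ker φ).map N.subtype ↔ ∃ hx : x ∈ N, φ ⟨x, hx⟩ = 0 := by
  simp

lemma LinearMap.eq_zero_of_le_map_subtype_ker {R M P : Type*} [Semiring R] [AddCommMonoid M]
    [Module R M] [AddCommMonoid P] [Module R P] {N : Submodule R M} {φ : N →ₗ[R] P}
    (h : N ≤ (LinearMap.ker φ).map N.subtype) : φ = 0 := by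
  ext ⟨x, hx⟩
  obtain ⟨_, hφx⟩ := LinearMap.mem_map_subtype_ker_iff.mp (h hx)
  exact hφx

namespace HomOfBidegree

variable {k : Type} [Field k] {n : ℕ} {N K : Ideal (Tpoly k n)} {α β : ℤ}
  {φ : N →ₗ[Tpoly k n] Tpoly k n ⧸ K}

lemma apply_eq_zero (hφ : HomOfBidegree N K α β φ) {f : Tpoly k n} (hf : f ∈ N) {γ δ : ℤ}
    (hfd : IsWeightedHomogeneous (bidegWeight n) f (γ, δ)) (hneg : γ + α < 0 ∨ δ + β < 0) :
    φ ⟨f, hf⟩ = 0 := by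
  obtain ⟨g, hg, hφf⟩ := hφ γ δ f hf hfd
  rw [hφf, eq_zero_of_isWeightedHomogeneous_bidegWeight hg hneg, map_zero]

lemma map_rename_le_map_ker (hφ : HomOfBidegree N K (-1) (-1) φ) {L : Ideal (Spoly k n)}
    (hL : IsHomogeneousIdeal L) {e : Fin n → Fin n ⊕ Fin n} {w : ℤ × ℤ}
    (hw : ∀ i, bidegWeight n (e i) = w) (hw0 : w.1 = 0 ∨ w.2 = 0) (hLN : L.map (rename e) ≤ N) :
    L.map (rename e) ≤ (LinearMap.ker φ).map N.subtype := by
  rw [Ideal.map_le_iff_le_comap]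
  intro p hp
  rw [Ideal.mem_comap, ← sum_homogeneousComponent p, map_sum]
  refine Submodule.sum_mem _ fun j _ => ?_
  have hjN : rename e (homogeneousComponent j p) ∈ N :=
    hLN (Ideal.mem_map_of_mem _ (hL p hp j))
  refine LinearMap.mem_map_subtype_ker_iff.mpr ⟨hjN, hφ.apply_eq_zero hjN
    ((homogeneousComponent_isHomogeneous j p).isWeightedHomogeneous_rename hw) ?_⟩
  rcases hw0 with h | h <;> simp [h]

end HomOfBidegree

section Frame

variable {k : Type} [Field k] {n : ℕ} {I : Ideal (Spoly k n)} {a b : ℕ}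
  {φ : frameIdeal I a b →ₗ[Tpoly k n] Tpoly k n ⧸ frameIdeal I a b}

lemma HomOfBidegree.Qpoly_mem_map_ker (hφ : HomOfBidegree _ _ (-1) (-1) φ)
    (hI : IsHomogeneousIdeal I) (ha : ¬ idealOfVars (Fin n) k ^ a ≤ I)
    (hmx : mxIdeal k n ^ (a + 1) ≤ (LinearMap.ker φ).map (frameIdeal I a b).subtype) :
    Qpoly k n ∈ (LinearMap.ker φ).map (frameIdeal I a b).subtype := by
  have hQ : Qpoly k n ∈ frameIdeal I a b :=
    Ideal.mem_sup_right (Ideal.mem_span_singleton_self _)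
  obtain ⟨g, hg, hφQ⟩ := hφ 1 1 _ hQ isWeightedHomogeneous_Qpoly
  rw [add_neg_cancel] at hg
  rw [eq_C_of_isWeightedHomogeneous_bidegWeight_zero hg] at hφQ
  obtain ⟨d, hd, hdI⟩ := exists_monomial_notMem_of_not_pow_idealOfVars_le ha
  set F := rename Sum.inl (monomial d (1 : k))
  have hF : F ∈ mxIdeal k n ^ a := by
    rw [mxIdeal_eq_map, ← Ideal.map_pow]
    exact Ideal.mem_map_of_mem _ ((monomial_mem_pow_idealOfVars_iff _ _ one_ne_zero).mpr hd.ge)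
  have hFQ : F * Qpoly k n ∈ (LinearMap.ker φ).map (frameIdeal I a b).subtype := by
    rw [Qpoly, Finset.mul_sum]
    refine Submodule.sum_mem _ fun i _ => ?_
    rw [show F * (X (Sum.inl i) * X (Sum.inr i)) = X (Sum.inr i) * (F * X (Sum.inl i)) by ring]
    exact Ideal.mul_mem_left _ _ (hmx (pow_succ (mxIdeal k n) a ▸
      Ideal.mul_mem_mul hF (Ideal.subset_span ⟨i, rfl⟩)))
  obtain ⟨hFQN, hφFQ⟩ := LinearMap.mem_map_subtype_ker_iff.mp hFQ
  have hφFQ_eq : φ ⟨F * Qpoly k n, hFQN⟩ = Ideal.Quotient.mk _ (F * C (coeff 0 g)) := by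
    rw [show (⟨F * Qpoly k n, hFQN⟩ : frameIdeal I a b) = F • ⟨Qpoly k n, hQ⟩ from rfl,
      map_smul, hφQ]
    rfl
  have hc : coeff 0 g = 0 := by
    by_contra hc
    rw [hφFQ_eq, Ideal.Quotient.eq_zero_iff_mem,
      Ideal.mul_unit_mem_iff_mem _ ((isUnit_iff_ne_zero.mpr hc).map C)] at hφFQ
    exact rename_inl_notMem_frameIdeal hI b (isHomogeneous_monomial 1 hd) hdI hφFQ
  exact LinearMap.mem_map_subtype_ker_iff.mpr ⟨hQ, by rw [hφQ, hc, C_0, map_zero]⟩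

end Frame

theorem stmt9_general {k : Type} [Field k] {n : ℕ}
    (I : Ideal (Spoly k n)) (hIhom : IsHomogeneousIdeal I)
    (a b : ℕ)
    (hma : ¬ ((Ideal.span (Set.range (X : Fin n → Spoly k n))) ^ a ≤ I))
    (J : Ideal (Tpoly k n)) (hJ : J = frameIdeal I a b)
    (φ : J →ₗ[Tpoly k n] (Tpoly k n ⧸ J))
    (hφ : HomOfBidegree J J (-1) (-1) φ) :
    φ = 0 := by
  subst hJ
  have hmx : mxIdeal k n ^ (a + 1) ≤ (LinearMap.ker φ).map (frameIdeal I a b).subtype := by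
    have hle : mxIdeal k n ^ (a + 1) ≤ frameIdeal I a b :=
      le_sup_right.trans (le_sup_left.trans le_sup_left)
    rw [mxIdeal_eq_map, ← Ideal.map_pow] at hle ⊢
    exact hφ.map_rename_le_map_ker (isHomogeneousIdeal_pow_idealOfVars _) (w := (1, 0))
      (fun _ => rfl) (Or.inr rfl) hle
  have hmy : myIdeal k n ^ (b + 1) ≤ (LinearMap.ker φ).map (frameIdeal I a b).subtype := by
    have hle : myIdeal k n ^ (b + 1) ≤ frameIdeal I a b := le_sup_right.trans le_sup_left
    rw [myIdeal_eq_map, ← Ideal.map_pow] at hle ⊢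
    exact hφ.map_rename_le_map_ker (isHomogeneousIdeal_pow_idealOfVars _) (w := (0, 1))
      (fun _ => rfl) (Or.inl rfl) hle
  have hIT := hφ.map_rename_le_map_ker hIhom (w := (1, 0)) (fun _ => rfl) (Or.inr rfl)
    (le_sup_left.trans (le_sup_left.trans le_sup_left))
  have hQ := hφ.Qpoly_mem_map_ker hIhom hma hmx
  exact LinearMap.eq_zero_of_le_map_subtype_ker
    (sup_le (sup_le (sup_le hIT hmx) hmy) (Ideal.span_le.mpr (Set.singleton_subset_iff.mpr hQ)))

/-- if `m_x^a ⊄ I` then `Hom_T(J, T/J)_{(−1,−1)} = 0`. -/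
theorem stmt9 {k : Type} [Field k] {n : ℕ} (hn : 1 ≤ n)
    (I : Ideal (Spoly k n)) (hIhom : IsHomogeneousIdeal I)
    (a b : ℕ) (ha : 2 ≤ a) (hb : 1 ≤ b)
    (hma : ¬ ((Ideal.span (Set.range (X : Fin n → Spoly k n))) ^ a ≤ I))
    (J : Ideal (Tpoly k n)) (hJ : J = frameIdeal I a b)
    (φ : J →ₗ[Tpoly k n] (Tpoly k n ⧸ J))
    (hφ : HomOfBidegree J J (-1) (-1) φ) :
    φ = 0 :=
  stmt9_general I hIhom a b hma J hJ φ hφ
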